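/- arXiv:cs/0309044 — 2 statements merged into one kernel-verified Lean document; each statement's English description precedes it below -/
import Mathlib

section
/- Let G be a finite connected simple graph containing at least one cycle, and let ω0 be an acyclic orientation of G. For a simple cycle κ of G, with its two traversal directions, let c+(κ,ω0) and c−(κ,ω0) be the numbers of edges of κ that ω0 orients along each of the two traversal directions, and let |κ| be the number of vertices of κ. Then, with p an eventual period of the synchronous edge-reversal sequence from ω0 and m the common number of times each vertex is a sink per period, m/p equals the minimum, over all simple cycles κ of G, of min(c+(κ,ω0), c−(κ,ω0)) / |κ|. -/
variable {V : Type*}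

/-- `o` is an orientation of the simple graph `G`: it assigns a direction to each
edge of `G` (for adjacent `u, v`, exactly one of `o u v`, `o v u` holds) and relates
no other pairs. -/
def IsOrientation (G : SimpleGraph V) (o : V → V → Prop) : Prop :=
  ∀ u v, (o u v → G.Adj u v) ∧ (G.Adj u v → (o u v ↔ ¬ o v u))

/-- A sink of an orientation: a vertex with no outgoing edge (every incident edge is
directed toward it). -/
def IsSink (o : V → V → Prop) (v : V) : Prop := ∀ u, ¬ o v u

/-- A directed graph (or orientation) is acyclic when it has no directed cycle. -/
def DirAcyclic (o : V → V → Prop) : Prop := ∀ v, ¬ Relation.TransGen o v v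

/-- The synchronous edge-reversal step: every edge incident to a sink is reversed
(every sink becomes a source); all other edges keep their direction. -/
def revStep (o : V → V → Prop) : V → V → Prop :=
  fun u v => (o u v ∧ ¬ IsSink o v) ∨ (o v u ∧ IsSink o u)

/-- The sequence of orientations produced by synchronous edge reversal:
`orientSeq ω0 s` is the result of `s` edge-reversal steps applied to `ω0`. -/
def orientSeq (ω0 : V → V → Prop) (s : ℕ) : V → V → Prop := revStep^[s] ω0

attribute [local instance] Classical.propDecidable

/-- The number of edges of the simple cycle `κ` that the orientation `o` orients along
the traversal direction of `κ`. -/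
noncomputable def cPlus {G : SimpleGraph V} {w : V} (o : V → V → Prop)
    (κ : G.Walk w w) : ℕ :=
  κ.darts.countP (fun d => decide (o d.toProd.1 d.toProd.2))

/-- The number of edges of the simple cycle `κ` that the orientation `o` orients
against the traversal direction of `κ` (i.e. along the opposite traversal). -/
noncomputable def cMinus {G : SimpleGraph V} {w : V} (o : V → V → Prop)
    (κ : G.Walk w w) : ℕ :=
  κ.darts.countP (fun d => decide (o d.toProd.2 d.toProd.1))

/-!
Write `N(v, s)` (`sinkCount ω0 v s`) for the number of times before `s` at which `v` is a sink. Every reversal of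
an edge happens at a sink endpoint, and the reversals of an edge alternate between its two
endpoints, so the edge `u → v` of `ω0` points backwards at time `s` exactly when
`N(v, s) - N(u, s) = 1`. Summed around a closed walk these potentials cancel, so `c⁺` and `c⁻`
never change.

Lower bound: in one period every vertex of `κ` is a sink `m` times, and each time the dart of `κ`
entering it is forward, so `|κ| m ≤ p c⁺`; the same for `c⁻` along the reversed cycle.

Upper bound: a sink at time `t + 1` has, at time `t`, an out-neighbour which was then a sink.
Tracing sinks backwards period by period must close up in the finite graph, which gives a closed
walk of length `k p` with exactly `k m` forward darts (the potentials telescope), i.e. of weight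
`0` when a dart weighs `p - m` if forward and `-m` if backward. Cutting it at repeated vertices
yields a cycle of weight `≤ 0`, i.e. with `p c⁺ ≤ m |κ|`, unless some back-and-forth pair of darts
has weight `p - 2 m ≤ 0`; but if `p ≤ 2 m`, every cycle attains the bound since
`min(c⁺, c⁻) ≤ |κ| / 2`.
-/

open Finset Relation

theorem orientSeq_succ (ω0 : V → V → Prop) (s : ℕ) :
    orientSeq ω0 (s + 1) = revStep (orientSeq ω0 s) :=
  Function.iterate_succ_apply' revStep s ω0

theorem revStep_iff_not_isSink {o : V → V → Prop} {u v : V} (huv : o u v) (hvu : ¬ o v u) :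
    revStep o u v ↔ ¬ IsSink o v := by
  simp [revStep, huv, hvu]

theorem revStep_swap_iff_isSink {o : V → V → Prop} {u v : V} (huv : o u v) (hvu : ¬ o v u) :
    revStep o v u ↔ IsSink o v := by
  simp [revStep, huv, hvu]

namespace IsOrientation

variable {G : SimpleGraph V} {o : V → V → Prop}

theorem adj (h : IsOrientation G o) {u v : V} (huv : o u v) : G.Adj u v := (h u v).1 huv

theorem not_swap (h : IsOrientation G o) {u v : V} (huv : o u v) : ¬ o v u :=
  ((h u v).2 (h.adj huv)).1 huv

theorem swap_of_not (h : IsOrientation G o) {u v : V} (hadj : G.Adj u v) (huv : ¬ o u v) :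
    o v u :=
  ((h v u).2 hadj.symm).2 huv

theorem of_isSink (h : IsOrientation G o) {u v : V} (hadj : G.Adj u v) (hv : IsSink o v) :
    o u v :=
  h.swap_of_not hadj.symm (hv u)

end IsOrientation

theorem isOrientation_revStep {G : SimpleGraph V} {o : V → V → Prop} (h : IsOrientation G o) :
    IsOrientation G (revStep o) := by
  refine fun u v => ⟨?_, fun hadj => ?_⟩
  · rintro (⟨huv, -⟩ | ⟨hvu, -⟩)
    exacts [h.adj huv, (h.adj hvu).symm]
  · by_cases huv : o u v
    · rw [revStep_iff_not_isSink huv (h.not_swap huv),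
        revStep_swap_iff_isSink huv (h.not_swap huv)]
    · have hvu := h.swap_of_not hadj huv
      rw [revStep_iff_not_isSink hvu huv, revStep_swap_iff_isSink hvu huv, not_not]

theorem isOrientation_orientSeq {G : SimpleGraph V} {ω0 : V → V → Prop}
    (h : IsOrientation G ω0) (s : ℕ) : IsOrientation G (orientSeq ω0 s) := by
  induction s with
  | zero => exact h
  | succ s ih => rw [orientSeq_succ]; exact isOrientation_revStep ih

theorem not_isSink_of_transGen_revStep {o : V → V → Prop} {a b : V}
    (h : TransGen (revStep o) a b) : ¬ IsSink o b := by
  have hlast : ∀ {c}, revStep o c b → ¬ IsSink o b := by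
    rintro c (⟨-, hb⟩ | ⟨hbc, -⟩)
    exacts [hb, fun hb => hb c hbc]
  cases h with
  | single h => exact hlast h
  | tail _ h => exact hlast h

theorem dirAcyclic_revStep {o : V → V → Prop} (h : DirAcyclic o) : DirAcyclic (revStep o) := by
  have hstep : ∀ {a b}, revStep o a b → ¬ IsSink o a → o a b := by
    rintro a b (⟨hab, -⟩ | ⟨-, ha⟩) hna
    exacts [hab, absurd ha hna]
  have hlift : ∀ {a b}, TransGen (revStep o) a b → ¬ IsSink o a → TransGen o a b := by
    intro a b hab hna
    induction hab with
    | single hab => exact .single (hstep hab hna)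
    | tail hac hcb ih => exact ih.tail (hstep hcb (not_isSink_of_transGen_revStep hac))
  exact fun v hv => h v (hlift hv (not_isSink_of_transGen_revStep hv))

theorem dirAcyclic_orientSeq {ω0 : V → V → Prop} (h : DirAcyclic ω0) (s : ℕ) :
    DirAcyclic (orientSeq ω0 s) := by
  induction s with
  | zero => exact h
  | succ s ih => rw [orientSeq_succ]; exact dirAcyclic_revStep ih

theorem Finite.exists_rel_self_of_forall_exists_rel {α : Type*} [Finite α] {R : α → α → Prop}
    [IsTrans α R] {S : Set α} (hS : S.Nonempty) (h : ∀ x ∈ S, ∃ y ∈ S, R y x) : ∃ x, R x x := by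
  by_contra! hirr
  have : Std.Irrefl R := ⟨hirr⟩
  obtain ⟨x, hxS, hmin⟩ := (Finite.wellFounded_of_trans_of_irrefl R).has_min S hS
  obtain ⟨y, hyS, hyx⟩ := h x hxS
  exact hmin y hyS hyx

theorem DirAcyclic.exists_isSink [Finite V] [Nonempty V] {o : V → V → Prop}
    (h : DirAcyclic o) : ∃ v, IsSink o v := by
  by_contra! hno
  have : IsTrans V fun a b => TransGen o b a := ⟨fun _ _ _ hab hbc => hbc.trans hab⟩
  obtain ⟨x, hx⟩ := Finite.exists_rel_self_of_forall_exists_rel (R := fun a b => TransGen o b a)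
    Set.univ_nonempty fun x _ => by
      obtain ⟨y, hxy⟩ : ∃ y, o x y := by simpa [IsSink] using hno x
      exact ⟨y, trivial, .single hxy⟩
  exact h x hx

noncomputable def dartFwd {G : SimpleGraph V} (o : V → V → Prop) (d : G.Dart) : ℤ :=
  if o d.fst d.snd then 1 else 0

noncomputable def sinkCount (ω0 : V → V → Prop) (v : V) (s : ℕ) : ℤ :=
  ∑ t ∈ range s, if IsSink (orientSeq ω0 t) v then 1 else 0

theorem dartFwd_add_dartFwd_symm {G : SimpleGraph V} {o : V → V → Prop}
    (h : IsOrientation G o) (d : G.Dart) : dartFwd o d + dartFwd o d.symm = 1 := by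
  by_cases hd : o d.fst d.snd
  · simp [dartFwd, hd, h.not_swap hd]
  · simp [dartFwd, hd, h.swap_of_not d.adj hd]

theorem dartFwd_revStep {G : SimpleGraph V} {o : V → V → Prop} (h : IsOrientation G o)
    (d : G.Dart) : dartFwd (revStep o) d = dartFwd o d
      + (if IsSink o d.fst then 1 else 0) - (if IsSink o d.snd then 1 else 0) := by
  obtain ⟨⟨u, v⟩, hadj⟩ := d
  by_cases huv : o u v
  · have hu : ¬ IsSink o u := fun hu => hu v huv
    by_cases hv : IsSink o v <;>
      simp [dartFwd, revStep_iff_not_isSink huv (h.not_swap huv), huv, hu, hv]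
  · have hvu := h.swap_of_not hadj huv
    have hv : ¬ IsSink o v := fun hv => hv u hvu
    by_cases hu : IsSink o u <;>
      simp [dartFwd, revStep_swap_iff_isSink hvu huv, huv, hu, hv]

theorem dartFwd_orientSeq {G : SimpleGraph V} {ω0 : V → V → Prop} (h : IsOrientation G ω0)
    (d : G.Dart) (s : ℕ) :
    dartFwd (orientSeq ω0 s) d = dartFwd ω0 d + sinkCount ω0 d.fst s - sinkCount ω0 d.snd s := by
  induction s with
  | zero => simp [sinkCount, orientSeq]
  | succ s ih =>
    rw [orientSeq_succ, dartFwd_revStep (isOrientation_orientSeq h s), ih]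
    simp only [sinkCount, sum_range_succ]
    ring

namespace SimpleGraph.Walk

variable {G : SimpleGraph V}

def dartSum (φ : G.Dart → ℤ) {u v : V} (W : G.Walk u v) : ℤ := (W.darts.map φ).sum

section Algebra

variable (φ : G.Dart → ℤ)

@[simp]
theorem dartSum_nil {u : V} : (nil : G.Walk u u).dartSum φ = 0 := rfl

@[simp]
theorem dartSum_cons {u v w : V} (h : G.Adj u v) (W : G.Walk v w) :
    (cons h W).dartSum φ = φ ⟨(u, v), h⟩ + W.dartSum φ := rfl

@[simp]
theorem dartSum_append {u v w : V} (W₁ : G.Walk u v) (W₂ : G.Walk v w) :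
    (W₁.append W₂).dartSum φ = W₁.dartSum φ + W₂.dartSum φ := by
  simp [dartSum]

@[simp]
theorem dartSum_concat {u v w : V} (W : G.Walk u v) (h : G.Adj v w) :
    (W.concat h).dartSum φ = W.dartSum φ + φ ⟨(v, w), h⟩ := by
  simp [dartSum, darts_concat]

theorem dartSum_reverse {u v : V} (W : G.Walk u v) :
    W.reverse.dartSum φ = W.dartSum (fun d => φ d.symm) := by
  simp [dartSum, darts_reverse, Function.comp_def]

theorem dartSum_add (ψ : G.Dart → ℤ) {u v : V} (W : G.Walk u v) :
    W.dartSum (fun d => φ d + ψ d) = W.dartSum φ + W.dartSum ψ := by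
  simp [dartSum, List.sum_map_add]

theorem dartSum_mul_sub_const (a c : ℤ) {u v : V} (W : G.Walk u v) :
    W.dartSum (fun d => a * φ d - c) = a * W.dartSum φ - W.length * c := by
  induction W with
  | nil => simp
  | cons h W ih => simp only [dartSum_cons, ih, length_cons]; push_cast; ring

theorem dartSum_const (c : ℤ) {u v : V} (W : G.Walk u v) :
    W.dartSum (fun _ => c) = W.length * c := by
  simp [dartSum]

theorem dartSum_sub_potential (ψ : V → ℤ) {u v : V} (W : G.Walk u v) :
    W.dartSum (fun d => ψ d.fst - ψ d.snd) = ψ u - ψ v := by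
  induction W with
  | nil => simp
  | cons h W ih => simp only [dartSum_cons, ih]; ring

end Algebra

theorem sum_dartSum {ι : Type*} (F : Finset ι) (f : ι → G.Dart → ℤ) {u v : V}
    (W : G.Walk u v) : ∑ i ∈ F, W.dartSum (f i) = W.dartSum (fun d => ∑ i ∈ F, f i d) := by
  induction W with
  | nil => simp
  | cons h W ih => simp only [dartSum_cons, sum_add_distrib, ih]

theorem dartSum_mono {f g : G.Dart → ℤ} (h : ∀ d, f d ≤ g d) {u v : V} (W : G.Walk u v) :
    W.dartSum f ≤ W.dartSum g :=
  List.sum_le_sum fun d _ => h d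

theorem exists_eq_append_of_not_isPath {u v : V} {W : G.Walk u v} (hW : ¬ W.IsPath) :
    ∃ (x : V) (A : G.Walk u x) (C : G.Walk x x) (B : G.Walk x v),
      0 < C.length ∧ W = A.append (C.append B) := by
  induction W with
  | nil => exact absurd IsPath.nil hW
  | @cons u w v h W ih =>
    by_cases hWp : W.IsPath
    · have hu : u ∈ W.support := by simpa [cons_isPath_iff, hWp] using hW
      refine ⟨u, nil, cons h (W.takeUntil u hu), W.dropUntil u hu, by simp, ?_⟩
      rw [nil_append, cons_append, take_spec]
    · obtain ⟨x, A, C, B, hC, rfl⟩ := ih hWp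
      exact ⟨x, cons h A, C, B, hC, rfl⟩

theorem IsPath.eq_cons_nil_of_mem_edges {u v : V} {W : G.Walk v u} (hW : W.IsPath)
    (h : G.Adj u v) (he : s(u, v) ∈ W.edges) : W = cons h.symm Walk.nil := by
  cases W with
  | nil => exact absurd rfl h.ne
  | @cons _ w _ h' W =>
    rw [cons_isPath_iff] at hW
    rw [edges_cons, List.mem_cons] at he
    rcases he with he | he
    · obtain rfl : w = u := by
        rcases Sym2.eq_iff.1 he with ⟨huv, -⟩ | ⟨huw, -⟩
        exacts [absurd huv h.ne, huw.symm]
      obtain rfl := (isPath_iff_nil.1 hW.1).eq_nil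
      rfl
    · exact absurd (W.snd_mem_support_of_mem_edges he) hW.2

/-- Split the walk at a repeated vertex into two shorter closed walks; one of them still has
nonpositive weight. -/
theorem exists_isCycle_dartSum_nonpos {φ : G.Dart → ℤ} (hφ : ∀ d, 0 < φ d + φ d.symm)
    {u : V} (W : G.Walk u u) (hW : 0 < W.length) (hsum : W.dartSum φ ≤ 0) :
    ∃ (w : V) (κ : G.Walk w w), κ.IsCycle ∧ κ.dartSum φ ≤ 0 := by
  induction hn : W.length using Nat.strong_induction_on generalizing u W with
  | _ n ih =>
  cases W with
  | nil => simp at hW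
  | @cons _ v _ h W =>
    by_cases hWp : W.IsPath
    · by_cases he : s(u, v) ∈ W.edges
      · obtain rfl := hWp.eq_cons_nil_of_mem_edges h he
        exact absurd hsum (by simpa using hφ ⟨(u, v), h⟩)
      · exact ⟨u, cons h W, (cons_isCycle_iff W h).2 ⟨hWp, he⟩, hsum⟩
    · obtain ⟨x, A, C, B, hC, rfl⟩ := exists_eq_append_of_not_isPath hWp
      simp only [length_cons, length_append] at hn
      rcases le_or_gt ((cons h (A.append B)).dartSum φ) 0 with hAB | hAB
      · exact ih (A.length + B.length + 1) (by omega) _ (by simp) hAB (by simp)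
      · simp only [dartSum_cons, dartSum_append] at hsum hAB
        exact ih C.length (by omega) C hC (by linarith) rfl

end SimpleGraph.Walk

theorem SimpleGraph.Preconnected.exists_adj_of_isCycle {G : SimpleGraph V}
    (hG : G.Preconnected) {w : V} {κ : G.Walk w w} (hκ : κ.IsCycle) (v : V) : ∃ u, G.Adj v u :=
  have : Nontrivial V := nontrivial_of_ne _ _ (κ.adj_snd hκ.not_nil).ne
  hG.exists_adj_of_nontrivial v

theorem ncard_sep_Ico_eq_sum (P : ℕ → Prop) (a b : ℕ) :
    ({s ∈ Set.Ico a b | P s}.ncard : ℤ) = ∑ s ∈ Ico a b, if P s then 1 else 0 := by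
  have hset : {s ∈ Set.Ico a b | P s} = ↑{s ∈ Ico a b | P s} := by
    ext
    simp
  rw [hset, Set.ncard_coe_finset, card_filter]
  push_cast
  rfl

open SimpleGraph

section Concurrency

variable {G : SimpleGraph V} {ω0 : V → V → Prop}

theorem cPlus_eq_dartSum (o : V → V → Prop) {w : V} (κ : G.Walk w w) :
    (cPlus o κ : ℤ) = κ.dartSum (dartFwd o) := by
  rw [cPlus, Walk.dartSum]
  induction κ.darts with
  | nil => rfl
  | cons d l ih => by_cases hd : o d.fst d.snd <;> simp [dartFwd, hd, ih, add_comm]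

theorem cMinus_eq_cPlus_reverse (o : V → V → Prop) {w : V} (κ : G.Walk w w) :
    cMinus o κ = cPlus o κ.reverse := by
  simp [cMinus, cPlus, Walk.darts_reverse, List.countP_map, Function.comp_def]

theorem cPlus_add_cMinus (hor : IsOrientation G ω0) {w : V} (κ : G.Walk w w) :
    cPlus ω0 κ + cMinus ω0 κ = κ.length := by
  zify
  rw [cMinus_eq_cPlus_reverse, cPlus_eq_dartSum, cPlus_eq_dartSum, Walk.dartSum_reverse,
    ← Walk.dartSum_add]
  simp [dartFwd_add_dartFwd_symm hor, Walk.dartSum_const]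

theorem dartSum_dartFwd_orientSeq (hor : IsOrientation G ω0) {u v : V} (W : G.Walk u v)
    (s : ℕ) : W.dartSum (dartFwd (orientSeq ω0 s)) =
      W.dartSum (dartFwd ω0) + sinkCount ω0 u s - sinkCount ω0 v s := by
  have h : dartFwd (orientSeq ω0 s) =
      fun d : G.Dart => dartFwd ω0 d + (sinkCount ω0 d.fst s - sinkCount ω0 d.snd s) := by
    ext d
    rw [dartFwd_orientSeq hor]
    ring
  rw [h, Walk.dartSum_add, W.dartSum_sub_potential (sinkCount ω0 · s)]
  ring

theorem cPlus_orientSeq (hor : IsOrientation G ω0) {w : V} (κ : G.Walk w w) (s : ℕ) :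
    cPlus (orientSeq ω0 s) κ = cPlus ω0 κ := by
  zify
  rw [cPlus_eq_dartSum, cPlus_eq_dartSum, dartSum_dartFwd_orientSeq hor]
  ring

/-- Counting the pairs (time, dart of `κ` entering a sink): each vertex is a sink `m` times in
`F`, and at each time at most `cPlus` darts of `κ` enter a sink. -/
theorem length_mul_le_card_mul_cPlus (hor : IsOrientation G ω0) (F : Finset ℕ) {m : ℕ}
    (hm : ∀ v, ∑ s ∈ F, (if IsSink (orientSeq ω0 s) v then 1 else 0 : ℤ) = m)
    {w : V} (κ : G.Walk w w) : κ.length * m ≤ F.card * cPlus ω0 κ := by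
  have hsinks : ∀ s, κ.dartSum (fun d => if IsSink (orientSeq ω0 s) d.snd then 1 else 0)
      ≤ cPlus ω0 κ := fun s => by
    rw [← cPlus_orientSeq hor κ s, cPlus_eq_dartSum]
    refine Walk.dartSum_mono (fun d => ?_) κ
    by_cases hd : IsSink (orientSeq ω0 s) d.snd
    · simp [dartFwd, hd, (isOrientation_orientSeq hor s).of_isSink d.adj hd]
    · simp only [hd, if_false, dartFwd]
      split_ifs <;> norm_num
  zify
  calc (κ.length * m : ℤ)
      = ∑ s ∈ F, κ.dartSum (fun d => if IsSink (orientSeq ω0 s) d.snd then 1 else 0) := by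
        rw [Walk.sum_dartSum]
        simp [hm, Walk.dartSum_const]
    _ ≤ ∑ _s ∈ F, (cPlus ω0 κ : ℤ) := sum_le_sum fun s _ => hsinks s
    _ = F.card * cPlus ω0 κ := by simp

theorem mul_length_le_min_mul (hor : IsOrientation G ω0) {s0 p m : ℕ}
    (hm : ∀ v, ∑ s ∈ Ico s0 (s0 + p), (if IsSink (orientSeq ω0 s) v then 1 else 0 : ℤ) = m)
    {w : V} (κ : G.Walk w w) : m * κ.length ≤ min (cPlus ω0 κ) (cMinus ω0 κ) * p := by
  have hplus := length_mul_le_card_mul_cPlus hor _ hm κ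
  have hminus := length_mul_le_card_mul_cPlus hor _ hm κ.reverse
  rw [Nat.card_Ico, Nat.add_sub_cancel_left] at hplus hminus
  rw [Walk.length_reverse, ← cMinus_eq_cPlus_reverse] at hminus
  rw [← min_mul_mul_right]
  exact le_min (by linarith) (by linarith)

theorem exists_isSink_of_isSink_revStep {o : V → V → Prop} (h : IsOrientation G o)
    (hnbr : ∀ v, ∃ u, G.Adj v u) {x : V} (hx : IsSink (revStep o) x) :
    ∃ y, o x y ∧ IsSink o y := by
  have hxo : ¬ IsSink o x := fun hxs => by
    obtain ⟨u, hxu⟩ := hnbr x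
    exact hx u ((revStep_swap_iff_isSink (h.of_isSink hxu.symm hxs) (hxs u)).2 hxs)
  obtain ⟨y, hxy⟩ : ∃ y, o x y := by simpa [IsSink] using hxo
  exact ⟨y, hxy, (revStep_swap_iff_isSink hxy (h.not_swap hxy)).1
    ((isOrientation_revStep h).of_isSink (h.adj hxy).symm hx)⟩

theorem exists_walk_of_isSink_orientSeq (hor : IsOrientation G ω0)
    (hnbr : ∀ v, ∃ u, G.Adj v u) {a b : ℕ} (hab : a ≤ b) {x : V}
    (hx : IsSink (orientSeq ω0 b) x) :
    ∃ y, IsSink (orientSeq ω0 a) y ∧ ∃ W : G.Walk y x, W.length = b - a ∧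
      W.dartSum (dartFwd ω0) = sinkCount ω0 x b - sinkCount ω0 y a := by
  induction b, hab using Nat.le_induction generalizing x with
  | base => exact ⟨x, hx, .nil, by simp, by simp⟩
  | succ t hat ih =>
    have hor_t := isOrientation_orientSeq hor t
    rw [orientSeq_succ] at hx
    obtain ⟨z, hxz, hz⟩ := exists_isSink_of_isSink_revStep hor_t hnbr hx
    obtain ⟨y, hy, W, hlen, hsum⟩ := ih hz
    have hzx : G.Adj z x := (hor_t.adj hxz).symm
    refine ⟨y, hy, W.concat hzx, by simp [hlen]; omega, ?_⟩
    have hflip : dartFwd ω0 ⟨(z, x), hzx⟩ = sinkCount ω0 x t - sinkCount ω0 z t := by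
      have h := dartFwd_orientSeq hor ⟨(z, x), hzx⟩ t
      rw [dartFwd, if_neg (hor_t.not_swap hxz)] at h
      linarith
    have hx_t : sinkCount ω0 x (t + 1) = sinkCount ω0 x t := by
      rw [sinkCount, sinkCount, sum_range_succ, if_neg fun hxs => hxs z hxz, add_zero]
    rw [Walk.dartSum_concat, hsum, hx_t, hflip]
    ring

theorem exists_closed_walk_dartSum_eq_zero [Finite V] [Nonempty V] (hor : IsOrientation G ω0)
    (hacy : DirAcyclic ω0) (hnbr : ∀ v, ∃ u, G.Adj v u) {s0 p m : ℕ} (hp : 0 < p)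
    (hper : ∀ s, s0 ≤ s → orientSeq ω0 (s + p) = orientSeq ω0 s)
    (hm : ∀ v, ∑ s ∈ Ico s0 (s0 + p), (if IsSink (orientSeq ω0 s) v then 1 else 0 : ℤ) = m) :
    ∃ (x : V) (W : G.Walk x x), 0 < W.length ∧
      W.dartSum (fun d => p * dartFwd ω0 d - m) = 0 := by
  let ψ : V → ℤ := fun v => p * sinkCount ω0 v s0
  let R : V → V → Prop := fun y x => ∃ W : G.Walk y x, 0 < W.length ∧
    W.dartSum (fun d => p * dartFwd ω0 d - m) = ψ x - ψ y
  have : IsTrans V R := ⟨fun _ _ _ ⟨W₁, hlen₁, hsum₁⟩ ⟨W₂, hlen₂, hsum₂⟩ =>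
    ⟨W₁.append W₂, by simp; omega, by rw [Walk.dartSum_append, hsum₁, hsum₂]; ring⟩⟩
  obtain ⟨x, W, hlen, hsum⟩ := Finite.exists_rel_self_of_forall_exists_rel (R := R)
    (S := {v | IsSink (orientSeq ω0 s0) v}) (dirAcyclic_orientSeq hacy s0).exists_isSink
    fun x hx => by
      have hx' : IsSink (orientSeq ω0 (s0 + p)) x := by rwa [hper s0 le_rfl]
      obtain ⟨y, hy, W, hlen, hsum⟩ :=
        exists_walk_of_isSink_orientSeq hor hnbr (Nat.le_add_right s0 p) hx'
      have hcount : sinkCount ω0 x (s0 + p) = sinkCount ω0 x s0 + m := by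
        rw [sinkCount, ← sum_range_add_sum_Ico _ (Nat.le_add_right s0 p), hm]
        rfl
      refine ⟨y, hy, W, by omega, ?_⟩
      rw [Walk.dartSum_mul_sub_const, hsum, hlen, Nat.add_sub_cancel_left, hcount]
      simp only [ψ]
      ring
  exact ⟨x, W, hlen, by simpa using hsum⟩

theorem exists_isCycle_mul_min_le [Finite V] (hor : IsOrientation G ω0) (hacy : DirAcyclic ω0)
    (hnbr : ∀ v, ∃ u, G.Adj v u) (hcyc : ∃ (w : V) (κ : G.Walk w w), κ.IsCycle)
    {s0 p m : ℕ} (hp : 0 < p) (hper : ∀ s, s0 ≤ s → orientSeq ω0 (s + p) = orientSeq ω0 s)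
    (hm : ∀ v, ∑ s ∈ Ico s0 (s0 + p), (if IsSink (orientSeq ω0 s) v then 1 else 0 : ℤ) = m) :
    ∃ (w : V) (κ : G.Walk w w), κ.IsCycle ∧ min (cPlus ω0 κ) (cMinus ω0 κ) * p ≤ m * κ.length := by
  obtain ⟨w₀, κ₀, hκ₀⟩ := hcyc
  have : Nonempty V := ⟨w₀⟩
  by_cases h2m : 2 * m < p
  · have hback : ∀ d : G.Dart, 0 < (p * dartFwd ω0 d - m) + (p * dartFwd ω0 d.symm - m) := by
      intro d
      have : (p : ℤ) * dartFwd ω0 d + p * dartFwd ω0 d.symm = p := by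
        rw [← mul_add, dartFwd_add_dartFwd_symm hor, mul_one]
      omega
    obtain ⟨x, W, hlen, hsum⟩ := exists_closed_walk_dartSum_eq_zero hor hacy hnbr hp hper hm
    obtain ⟨w, κ, hκ, hκsum⟩ := W.exists_isCycle_dartSum_nonpos hback hlen hsum.le
    refine ⟨w, κ, hκ, (Nat.mul_le_mul_right p (min_le_left _ _)).trans ?_⟩
    rw [Walk.dartSum_mul_sub_const, ← cPlus_eq_dartSum] at hκsum
    zify
    linarith
  · refine ⟨w₀, κ₀, hκ₀, ?_⟩
    have := cPlus_add_cMinus hor κ₀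
    have := min_le_left (cPlus ω0 κ₀) (cMinus ω0 κ₀)
    have := min_le_right (cPlus ω0 κ₀) (cMinus ω0 κ₀)
    nlinarith

end Concurrency

/-- For an edge-reversal computation on a finite connected simple graph containing at
least one cycle, the concurrency `m/p` equals the minimum over all simple cycles `κ`
of `min(c⁺(κ,ω0), c⁻(κ,ω0)) / |κ|`. -/
theorem edge_reversal_concurrency_formula [Fintype V]
    (G : SimpleGraph V) (hG : G.Connected)
    (hcyc : ∃ (w : V) (κ : G.Walk w w), κ.IsCycle)
    (ω0 : V → V → Prop) (hor : IsOrientation G ω0) (hacy : DirAcyclic ω0)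
    (s0 p m : ℕ) (hp : 0 < p)
    (hper : ∀ s, s0 ≤ s → orientSeq ω0 (s + p) = orientSeq ω0 s)
    (hm : ∀ v : V, {s ∈ Set.Ico s0 (s0 + p) | IsSink (orientSeq ω0 s) v}.ncard = m) :
    (∀ (w : V) (κ : G.Walk w w), κ.IsCycle →
        (m : ℚ) / (p : ℚ) ≤ (min (cPlus ω0 κ) (cMinus ω0 κ) : ℚ) / (κ.length : ℚ)) ∧
      ∃ (w : V) (κ : G.Walk w w), κ.IsCycle ∧
        (m : ℚ) / (p : ℚ) = (min (cPlus ω0 κ) (cMinus ω0 κ) : ℚ) / (κ.length : ℚ) := by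
  have hm' : ∀ v, ∑ s ∈ Ico s0 (s0 + p), (if IsSink (orientSeq ω0 s) v then 1 else 0 : ℤ) = m :=
    fun v => by rw [← hm v, ncard_sep_Ico_eq_sum]
  obtain ⟨w₀, κ₀, hκ₀⟩ := hcyc
  have hnbr := hG.preconnected.exists_adj_of_isCycle hκ₀
  have hlen : ∀ (w : V) (κ : G.Walk w w), κ.IsCycle → (0 : ℚ) < κ.length :=
    fun _ κ hκ => Nat.cast_pos.2 (three_pos.trans_le hκ.three_le_length)
  have hp' : (0 : ℚ) < p := by exact_mod_cast hp
  obtain ⟨w, κ, hκ, hup⟩ := exists_isCycle_mul_min_le hor hacy hnbr ⟨w₀, κ₀, hκ₀⟩ hp hper hm'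
  refine ⟨fun w κ hκ => ?_, w, κ, hκ, ?_⟩
  · rw [div_le_div_iff₀ hp' (hlen w κ hκ)]
    exact_mod_cast mul_length_le_min_mul hor hm' κ
  · rw [div_eq_div_iff hp'.ne' (hlen w κ hκ).ne']
    exact_mod_cast (mul_length_le_min_mul hor hm' κ).antisymm hup
end

section
/- In the bead-reversal setting on G (with e_uv = r_u + r_v − gcd(r_u, r_v) on every edge and all bead counts multiples of the respective gcd), suppose the initial configuration satisfies σ(κ) < ρ(κ) for every simple cycle κ of G. Then every configuration reachable by a finite sequence of bead-reversal steps, each performed at an enabled vertex, again satisfies σ(κ) < ρ(κ) for every simple cycle κ, its induced orientation is acyclic, and hence (if G has at least one vertex) at least one vertex is enabled. In particular, every bead-reversal computation started from such a configuration is deadlock-free. -/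
variable {V : Type*}

attribute [local instance] Classical.propDecidable

/-- `a` is a bead configuration on `G` (with bead numbers `r`): `a u v` is the number
of beads at `u`'s end of the edge `{u, v}`; each edge `{u, v}` carries
`e_uv = r u + r v − gcd (r u) (r v)` beads in total, and every bead count is a
multiple of `gcd (r u) (r v)`. -/
def IsBeadConfig (G : SimpleGraph V) (r : V → ℕ) (a : V → V → ℕ) : Prop :=
  ∀ u v, G.Adj u v →
    a u v + a v u = r u + r v - Nat.gcd (r u) (r v) ∧ Nat.gcd (r u) (r v) ∣ a u v

/-- A vertex `v` is enabled when every edge incident to `v` carries at least `r v`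
beads at `v`'s end. -/
def Enabled (G : SimpleGraph V) (r : V → ℕ) (a : V → V → ℕ) (v : V) : Prop :=
  ∀ u, G.Adj v u → r v ≤ a v u

/-- The bead-reversal step at vertex `v`: `r v` beads are moved from `v`'s end to the
opposite end of every edge incident to `v`. -/
noncomputable def beadStep (G : SimpleGraph V) (r : V → ℕ) (a : V → V → ℕ) (v : V) :
    V → V → ℕ :=
  fun x y =>
    if x = v ∧ G.Adj v y then a x y - r v
    else if y = v ∧ G.Adj v x then a x y + r v
    else a x y

/-- `σ⁺(κ)`: the sum, over the edges of the cycle `κ` traversed as `u → v` along the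
traversal direction of `κ`, of the number of beads at `v`'s end. -/
def sigmaPlus {G : SimpleGraph V} {w : V} (a : V → V → ℕ) (κ : G.Walk w w) : ℕ :=
  (κ.darts.map (fun d => a d.toProd.2 d.toProd.1)).sum

/-- `σ⁻(κ)`: the sum, over the edges of the cycle `κ` traversed as `u → v` along the
traversal direction opposite to that of `κ`, of the number of beads at `u`'s end. -/
def sigmaMinus {G : SimpleGraph V} {w : V} (a : V → V → ℕ) (κ : G.Walk w w) : ℕ :=
  (κ.darts.map (fun d => a d.toProd.1 d.toProd.2)).sum

/-- `ρ(κ)`: the sum of `r v` over the vertices `v` of the cycle `κ`. -/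
def rho {G : SimpleGraph V} {w : V} (r : V → ℕ) (κ : G.Walk w w) : ℕ :=
  (κ.support.tail.map r).sum

/-- The orientation of `G` induced by a bead configuration: the edge `{u, v}` is
directed `u → v` exactly when there are at least `r v` beads at `v`'s end. -/
def inducedOrientation (G : SimpleGraph V) (r : V → ℕ) (a : V → V → ℕ) :
    V → V → Prop :=
  fun u v => G.Adj u v ∧ r v ≤ a v u

/-- One bead-reversal step: some enabled vertex performs a bead reversal. -/
noncomputable def BeadStepRel (G : SimpleGraph V) (r : V → ℕ) :
    (V → V → ℕ) → (V → V → ℕ) → Prop :=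
  fun a a' => ∃ v, Enabled G r a v ∧ a' = beadStep G r a v

/-!
The quantities `σ⁺(κ)` and `σ⁻(κ)` never change: a reversal at `v` removes `r v` beads from
the end at `v` of each incident edge and adds them at the far end, and along a closed walk
these changes cancel in pairs at every passage through `v`. Bead counts being multiples of
the gcd, every edge points to exactly one endpoint, so the induced orientation is an
asymmetric orientation of `G`; a directed cycle in it could be shortened to an oriented
simple cycle `κ`, whose beads satisfy `σ⁺(κ) ≥ ρ(κ)`. Hence the orientation stays acyclic,
and an acyclic orientation of a finite graph has a sink, which is an enabled vertex.
-/

namespace IsBeadConfig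

variable {G : SimpleGraph V} {r : V → ℕ} {a : V → V → ℕ} {u v : V}

theorem le_or_le (hconf : IsBeadConfig G r a) (h : G.Adj u v) :
    r u ≤ a u v ∨ r v ≤ a v u := by
  obtain ⟨hsum, hdvd⟩ := hconf u v h
  obtain ⟨-, hdvd'⟩ := hconf v u h.symm
  rw [Nat.gcd_comm] at hdvd'
  set g := Nat.gcd (r u) (r v)
  have step : ∀ {n m : ℕ}, g ∣ n → g ∣ m → n < m → n + g ≤ m := fun hn hm hlt => by
    have := Nat.le_of_dvd (Nat.sub_pos_of_lt hlt) (Nat.dvd_sub hm hn)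
    omega
  by_contra! hlt
  have hgu := step hdvd (Nat.gcd_dvd_left _ _) hlt.1
  have hgv := step hdvd' (Nat.gcd_dvd_right _ _) hlt.2
  omega

theorem not_le_and_le (hconf : IsBeadConfig G r a) (h : G.Adj u v) (hu : 0 < r u) :
    ¬ (r u ≤ a u v ∧ r v ≤ a v u) := by
  have hg : 0 < Nat.gcd (r u) (r v) := Nat.gcd_pos_of_pos_left _ hu
  have := (hconf u v h).1
  omega

theorem beadStep (hconf : IsBeadConfig G r a) (hv : Enabled G r a v) :
    IsBeadConfig G r (beadStep G r a v) := by
  intro x y hxy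
  obtain ⟨hsum, hdvd⟩ := hconf x y hxy
  have hyx := hxy.symm
  have hne := hxy.ne
  unfold _root_.beadStep
  by_cases hx : x = v
  · subst hx
    have := hv y hxy
    simp only [hxy, hne.symm, and_self, if_true, false_and, if_false]
    exact ⟨by omega, Nat.dvd_sub hdvd (Nat.gcd_dvd_left _ _)⟩
  · by_cases hy : y = v
    · subst hy
      have := hv x hyx
      simp only [hx, hyx, false_and, if_false, and_self, if_true]
      exact ⟨by omega, Nat.dvd_add hdvd (Nat.gcd_dvd_right _ _)⟩
    · simp only [hx, hy, false_and, if_false]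
      exact ⟨hsum, hdvd⟩

end IsBeadConfig

namespace SimpleGraph.Walk

variable {G : SimpleGraph V}

theorem sum_map_darts_add_eq {f g : G.Dart → ℕ} {φ : V → ℕ}
    (h : ∀ d : G.Dart, f d + φ d.snd = g d + φ d.fst) {x y : V} (p : G.Walk x y) :
    (p.darts.map f).sum + φ y = (p.darts.map g).sum + φ x := by
  induction p with
  | nil => simp
  | @cons x z y hxz q ih =>
    have hd := h ⟨(x, z), hxz⟩
    simp only [darts_cons, List.map_cons, List.sum_cons] at hd ⊢
    omega

theorem sum_map_darts_eq_of_add_eq {f g : G.Dart → ℕ} {φ : V → ℕ}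
    (h : ∀ d : G.Dart, f d + φ d.snd = g d + φ d.fst) {w : V} (p : G.Walk w w) :
    (p.darts.map f).sum = (p.darts.map g).sum :=
  Nat.add_right_cancel (sum_map_darts_add_eq h p)

theorem exists_walk_of_reflTransGen {R : V → V → Prop} (hR : ∀ x y, R x y → G.Adj x y)
    {x y : V} (h : Relation.ReflTransGen R x y) :
    ∃ p : G.Walk x y, ∀ d ∈ p.darts, R d.fst d.snd := by
  induction h with
  | refl => exact ⟨nil, by simp⟩
  | @tail b c _ hbc ih =>
    obtain ⟨p, hp⟩ := ih
    refine ⟨p.concat (hR b c hbc), fun d hd => ?_⟩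
    simp only [darts_concat, List.concat_eq_append, List.mem_append, List.mem_singleton] at hd
    rcases hd with hd | rfl
    · exact hp d hd
    · exact hbc

theorem exists_isCycle_of_transGen {R : V → V → Prop} (hR : ∀ x y, R x y → G.Adj x y)
    (hasymm : ∀ x y, R x y → ¬ R y x) {v : V} (h : Relation.TransGen R v v) :
    ∃ (u : V) (c : G.Walk u u), c.IsCycle ∧ ∀ d ∈ c.darts, R d.fst d.snd := by
  obtain ⟨u, hvu, huv⟩ := Relation.TransGen.tail'_iff.mp h
  obtain ⟨p, hp⟩ := exists_walk_of_reflTransGen hR hvu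
  have hq : ∀ d ∈ p.bypass.darts, R d.fst d.snd := fun d hd =>
    hp d (p.darts_bypass_subset_darts hd)
  refine ⟨u, cons (hR u v huv) p.bypass, ?_, ?_⟩
  · refine (cons_isCycle_iff _ _).mpr ⟨p.bypass_isPath, fun he => ?_⟩
    have hsingle := p.bypass_isPath.eq_adj_toWalk_of_mem_edges (Sym2.eq_swap ▸ he)
    refine hasymm u v huv (hq ⟨(v, u), (hR u v huv).symm⟩ ?_)
    rw [hsingle]
    simp
  · intro d hd
    rw [darts_cons, List.mem_cons] at hd
    rcases hd with rfl | hd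
    · exact huv
    · exact hq d hd

end SimpleGraph.Walk

theorem Relation.exists_forall_not_of_acyclic [Finite V] [Nonempty V] {R : V → V → Prop}
    (h : ∀ v, ¬ Relation.TransGen R v v) : ∃ v, ∀ u, ¬ R v u := by
  have hwf : WellFounded (flip (Relation.TransGen R)) :=
    @Finite.wellFounded_of_trans_of_irrefl _ _ _ ⟨fun _ _ _ hab hbc => hbc.trans hab⟩ ⟨h⟩
  obtain ⟨v, -, hv⟩ := hwf.has_min Set.univ Set.univ_nonempty
  exact ⟨v, fun u hvu => hv u trivial (Relation.TransGen.single hvu)⟩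

section BeadReversal

variable {G : SimpleGraph V} {r : V → ℕ} {a : V → V → ℕ} {v : V}

theorem beadStep_add_single (hv : Enabled G r a v) {x y : V} (h : G.Adj x y) :
    beadStep G r a v y x + (Pi.single v (r v) : V → ℕ) y =
      a y x + (Pi.single v (r v) : V → ℕ) x := by
  unfold beadStep
  by_cases hy : y = v
  · subst hy
    have := hv x h.symm
    simp [h.symm, h.ne]
    omega
  · by_cases hx : x = v
    · subst hx
      simp [h, hy]
    · simp [hx, hy]

theorem sigmaPlus_beadStep (hv : Enabled G r a v) {w : V} (κ : G.Walk w w) :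
    sigmaPlus (beadStep G r a v) κ = sigmaPlus a κ := by
  unfold sigmaPlus
  exact κ.sum_map_darts_eq_of_add_eq fun d => beadStep_add_single hv d.adj

theorem sigmaMinus_eq_sigmaPlus_reverse {w : V} (κ : G.Walk w w) :
    sigmaMinus a κ = sigmaPlus a κ.reverse := by
  simp [sigmaMinus, sigmaPlus, SimpleGraph.Walk.darts_reverse, List.map_reverse,
    Function.comp_def]

theorem sigmaMinus_beadStep (hv : Enabled G r a v) {w : V} (κ : G.Walk w w) :
    sigmaMinus (beadStep G r a v) κ = sigmaMinus a κ := by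
  rw [sigmaMinus_eq_sigmaPlus_reverse, sigmaMinus_eq_sigmaPlus_reverse, sigmaPlus_beadStep hv]

theorem sigmaPlus_eq_of_reflTransGen {a0 : V → V → ℕ}
    (h : Relation.ReflTransGen (BeadStepRel G r) a0 a) {w : V} (κ : G.Walk w w) :
    sigmaPlus a κ = sigmaPlus a0 κ := by
  induction h with
  | refl => rfl
  | tail _ hstep ih =>
    obtain ⟨v, hv, rfl⟩ := hstep
    rw [sigmaPlus_beadStep hv, ih]

theorem sigmaMinus_eq_of_reflTransGen {a0 : V → V → ℕ}
    (h : Relation.ReflTransGen (BeadStepRel G r) a0 a) {w : V} (κ : G.Walk w w) :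
    sigmaMinus a κ = sigmaMinus a0 κ := by
  induction h with
  | refl => rfl
  | tail _ hstep ih =>
    obtain ⟨v, hv, rfl⟩ := hstep
    rw [sigmaMinus_beadStep hv, ih]

theorem IsBeadConfig.of_reflTransGen {a0 : V → V → ℕ} (hconf : IsBeadConfig G r a0)
    (h : Relation.ReflTransGen (BeadStepRel G r) a0 a) : IsBeadConfig G r a := by
  induction h with
  | refl => exact hconf
  | tail _ hstep ih =>
    obtain ⟨v, hv, rfl⟩ := hstep
    exact ih.beadStep hv

theorem rho_le_sigmaPlus {w : V} (κ : G.Walk w w)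
    (hκ : ∀ d ∈ κ.darts, inducedOrientation G r a d.fst d.snd) :
    rho r κ ≤ sigmaPlus a κ := by
  unfold rho sigmaPlus
  rw [← κ.map_snd_darts, List.map_map]
  exact List.sum_le_sum fun d hd => (hκ d hd).2

theorem inducedOrientation_acyclic (hr : ∀ v, 0 < r v) (hconf : IsBeadConfig G r a)
    (hσ : ∀ (w : V) (κ : G.Walk w w), κ.IsCycle →
      max (sigmaPlus a κ) (sigmaMinus a κ) < rho r κ) (v : V) :
    ¬ Relation.TransGen (inducedOrientation G r a) v v := by
  intro h
  obtain ⟨w, κ, hκ, horient⟩ := SimpleGraph.Walk.exists_isCycle_of_transGen (fun _ _ h => h.1)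
    (fun x y hxy hyx => hconf.not_le_and_le hxy.1 (hr x) ⟨hyx.2, hxy.2⟩) h
  have := hσ w κ hκ
  have := rho_le_sigmaPlus κ horient
  omega

theorem exists_enabled_of_acyclic [Finite V] [Nonempty V] (hconf : IsBeadConfig G r a)
    (hacyc : ∀ v, ¬ Relation.TransGen (inducedOrientation G r a) v v) :
    ∃ v, Enabled G r a v := by
  obtain ⟨v, hv⟩ := Relation.exists_forall_not_of_acyclic hacyc
  exact ⟨v, fun u hvu => (hconf.le_or_le hvu).resolve_right fun hu => hv u ⟨hvu, hu⟩⟩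

end BeadReversal

theorem bead_reversal_deadlock_free_general [Fintype V]
    (G : SimpleGraph V)
    (r : V → ℕ) (hr : ∀ v, 0 < r v)
    (a0 : V → V → ℕ) (hconf : IsBeadConfig G r a0)
    (hσ0 : ∀ (w : V) (κ : G.Walk w w), κ.IsCycle →
      max (sigmaPlus a0 κ) (sigmaMinus a0 κ) < rho r κ) :
    ∀ a : V → V → ℕ, Relation.ReflTransGen (BeadStepRel G r) a0 a →
      (∀ (w : V) (κ : G.Walk w w), κ.IsCycle →
          max (sigmaPlus a κ) (sigmaMinus a κ) < rho r κ) ∧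
        (∀ v, ¬ Relation.TransGen (inducedOrientation G r a) v v) ∧
        (Nonempty V → ∃ v, Enabled G r a v) := by
  intro a ha
  have hconf' := hconf.of_reflTransGen ha
  have hσ : ∀ (w : V) (κ : G.Walk w w), κ.IsCycle →
      max (sigmaPlus a κ) (sigmaMinus a κ) < rho r κ := fun w κ hκ => by
    rw [sigmaPlus_eq_of_reflTransGen ha, sigmaMinus_eq_of_reflTransGen ha]
    exact hσ0 w κ hκ
  have hacyc := inducedOrientation_acyclic hr hconf' hσ
  exact ⟨hσ, hacyc, fun _ => exists_enabled_of_acyclic hconf' hacyc⟩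

/-- Every bead-reversal computation started from a configuration with
`σ(κ) < ρ(κ)` for every simple cycle `κ` is deadlock-free: every reachable
configuration again satisfies `σ(κ) < ρ(κ)` for every simple cycle `κ`, its induced
orientation is acyclic, and hence (if `G` has at least one vertex) at least one
vertex is enabled. -/
theorem bead_reversal_deadlock_free [Fintype V]
    (G : SimpleGraph V) (hG : G.Connected)
    (r : V → ℕ) (hr : ∀ v, 0 < r v)
    (a0 : V → V → ℕ) (hconf : IsBeadConfig G r a0)
    (hσ0 : ∀ (w : V) (κ : G.Walk w w), κ.IsCycle →
      max (sigmaPlus a0 κ) (sigmaMinus a0 κ) < rho r κ) :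
    ∀ a : V → V → ℕ, Relation.ReflTransGen (BeadStepRel G r) a0 a →
      (∀ (w : V) (κ : G.Walk w w), κ.IsCycle →
          max (sigmaPlus a κ) (sigmaMinus a κ) < rho r κ) ∧
        (∀ v, ¬ Relation.TransGen (inducedOrientation G r a) v v) ∧
        (Nonempty V → ∃ v, Enabled G r a v) :=
  bead_reversal_deadlock_free_general G r hr a0 hconf hσ0
end
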